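/- (Oppenheim-type inequality) If A and B are positive semidefinite Hermitian N×N matrices, then det(A) · det(B) ≤ det(A ∘ B). -/

import Mathlib

open ComplexOrder

/-!
Induction on the dimension. For positive definite `A`, `B`, split off the last coordinate and
write `A₁₁ = S_A + E_A`, where `S_A` is the Schur complement of the corner entry `α` and
`E_A = a α⁻¹ a*` has rank one; similarly for `B`. Since the corner blocks are `1 × 1`, the
rank-one part of `A ∘ B` is exactly `E_A ∘ E_B`, so the Schur complement of `A ∘ B` is
`S_A ∘ S_B + (S_A ∘ E_B + E_A ∘ S_B)`, which dominates `S_A ∘ S_B` in the Loewner order by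
the Schur product theorem. Determinants are monotone in the Loewner order, so with
`det A = α det S_A` the induction hypothesis applied to `S_A, S_B` closes the step. If `A` or `B`
is singular, the left-hand side vanishes and `A ∘ B` is positive semidefinite.
-/

namespace Matrix

variable {𝕜 : Type*} [RCLike 𝕜] {m o : Type*}

theorem PosSemidef.one_le_det_one_add [Fintype m] [DecidableEq m] {F : Matrix m m 𝕜}
    (hF : F.PosSemidef) : 1 ≤ (1 + F).det := by
  have hdet : (1 + F).det = ∏ i, (1 + hF.1.eigenvalues i : 𝕜) := by
    conv_lhs => rw [hF.1.spectral_theorem,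
      ← map_one (Unitary.conjStarAlgAut 𝕜 _ hF.1.eigenvectorUnitary), ← map_add,
      Unitary.conjStarAlgAut_apply, det_mul_comm, ← mul_assoc, Unitary.coe_star_mul_self,
      one_mul, ← diagonal_one, diagonal_add, det_diagonal]
    rfl
  rw [hdet]
  exact Finset.one_le_prod fun i _ =>
    le_add_of_nonneg_right (RCLike.ofReal_nonneg.mpr (hF.eigenvalues_nonneg i))

open scoped MatrixOrder in
theorem PosDef.det_le_det_add [Fintype m] [DecidableEq m] {P E : Matrix m m 𝕜} (hP : P.PosDef)
    (hE : E.PosSemidef) : P.det ≤ (P + E).det := by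
  set S := CFC.sqrt P
  have hS : S.IsHermitian := (nonneg_iff_posSemidef.mp (CFC.sqrt_nonneg P)).1
  have hSS : S * S = P := CFC.sqrt_mul_sqrt_self P hP.posSemidef.nonneg
  have hS_det : IsUnit S.det :=
    (isUnit_iff_isUnit_det S).mp (isUnit_of_mul_isUnit_left (hSS ▸ hP.isUnit))
  have hF : (S⁻¹ * E * S⁻¹).PosSemidef := by
    simpa [conjTranspose_nonsing_inv, hS.eq] using hE.conjTranspose_mul_mul_same S⁻¹
  have hPE : P + E = S * (1 + S⁻¹ * E * S⁻¹) * S := by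
    rw [mul_add, add_mul, mul_one, hSS, ← mul_assoc, ← mul_assoc, mul_nonsing_inv _ hS_det,
      one_mul, mul_assoc, nonsing_inv_mul _ hS_det, mul_one]
  calc P.det = P.det * 1 := (mul_one _).symm
    _ ≤ P.det * (1 + S⁻¹ * E * S⁻¹).det :=
      mul_le_mul_of_nonneg_left hF.one_le_det_one_add hP.det_pos.le
    _ = (P + E).det := by rw [hPE, ← hSS, det_mul, det_mul, det_mul]; ring

theorem PosSemidef.det_le_det_add [Fintype m] [DecidableEq m] {P E : Matrix m m 𝕜}
    (hP : P.PosSemidef) (hE : E.PosSemidef) : P.det ≤ (P + E).det := by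
  by_cases hPd : P.PosDef
  · exact hPd.det_le_det_add hE
  · rw [hP.posDef_iff_det_ne_zero, not_not] at hPd
    exact hPd ▸ (hP.add hE).det_nonneg

noncomputable def schurComplement₂₂ {α : Type*} [CommRing α] [Fintype o] [DecidableEq o]
    (M : Matrix (m ⊕ o) (m ⊕ o) α) : Matrix m m α :=
  M.toBlocks₁₁ - M.toBlocks₁₂ * M.toBlocks₂₂⁻¹ * M.toBlocks₂₁

theorem det_eq_det_toBlocks₂₂_mul_det_schurComplement₂₂ {α : Type*} [CommRing α]
    [Fintype m] [DecidableEq m] [Fintype o] [DecidableEq o]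
    (M : Matrix (m ⊕ o) (m ⊕ o) α) (h : IsUnit M.toBlocks₂₂.det) :
    M.det = M.toBlocks₂₂.det * M.schurComplement₂₂.det := by
  let := M.toBlocks₂₂.invertibleOfIsUnitDet h
  conv_lhs => rw [← fromBlocks_toBlocks M]
  rw [det_fromBlocks₂₂, invOf_eq_nonsing_inv, schurComplement₂₂]

theorem IsHermitian.conjTranspose_toBlocks₁₂ {α : Type*} [InvolutiveStar α]
    {M : Matrix (m ⊕ o) (m ⊕ o) α} (hM : M.IsHermitian) : M.toBlocks₁₂ᴴ = M.toBlocks₂₁ := by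
  rw [← fromBlocks_toBlocks M] at hM
  exact (isHermitian_fromBlocks_iff.mp hM).2.1

theorem PosDef.toBlocks₂₂ [Finite o] {M : Matrix (m ⊕ o) (m ⊕ o) 𝕜} (hM : M.PosDef) :
    M.toBlocks₂₂.PosDef :=
  hM.submatrix Sum.inr_injective

theorem PosDef.posSemidef_schurComplement₂₂ [Fintype m] [Fintype o] [DecidableEq o]
    {M : Matrix (m ⊕ o) (m ⊕ o) 𝕜} (hM : M.PosDef) : M.schurComplement₂₂.PosSemidef := by
  let := M.toBlocks₂₂.invertibleOfIsUnitDet hM.toBlocks₂₂.det_pos.ne'.isUnit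
  rw [schurComplement₂₂, ← hM.1.conjTranspose_toBlocks₁₂,
    ← PosDef.fromBlocks₂₂ _ _ hM.toBlocks₂₂, hM.1.conjTranspose_toBlocks₁₂, fromBlocks_toBlocks]
  exact hM.posSemidef

theorem PosDef.posSemidef_toBlocks₁₂_mul_inv_mul_toBlocks₂₁ [Fintype m] [Fintype o]
    [DecidableEq o] {M : Matrix (m ⊕ o) (m ⊕ o) 𝕜} (hM : M.PosDef) :
    (M.toBlocks₁₂ * M.toBlocks₂₂⁻¹ * M.toBlocks₂₁).PosSemidef := by
  rw [← hM.1.conjTranspose_toBlocks₁₂]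
  exact hM.toBlocks₂₂.posSemidef.inv.mul_mul_conjTranspose_same _

theorem hadamard_mul_inv_mul_hadamard {K : Type*} [Field K] [Fintype o] [DecidableEq o] [Unique o]
    (X X' : Matrix m o K) (D D' : Matrix o o K) (Y Y' : Matrix o m K) :
    (X ⊙ X') * (D ⊙ D')⁻¹ * (Y ⊙ Y') = (X * D⁻¹ * Y) ⊙ (X' * D'⁻¹ * Y') := by
  ext i j
  simp [mul_apply, Ring.inverse_eq_inv]
  ring

theorem schurComplement₂₂_hadamard {K : Type*} [Field K] [Fintype o] [DecidableEq o] [Unique o]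
    (A B : Matrix (m ⊕ o) (m ⊕ o) K) :
    (A ⊙ B).schurComplement₂₂ =
      A.schurComplement₂₂ ⊙ B.schurComplement₂₂ +
        (A.schurComplement₂₂ ⊙ (B.toBlocks₁₂ * B.toBlocks₂₂⁻¹ * B.toBlocks₂₁) +
          (A.toBlocks₁₂ * A.toBlocks₂₂⁻¹ * A.toBlocks₂₁) ⊙ B.schurComplement₂₂) := by
  have h₁₁ : (A ⊙ B).toBlocks₁₁ = A.toBlocks₁₁ ⊙ B.toBlocks₁₁ := rfl
  have h₁₂ : (A ⊙ B).toBlocks₁₂ = A.toBlocks₁₂ ⊙ B.toBlocks₁₂ := rfl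
  have h₂₁ : (A ⊙ B).toBlocks₂₁ = A.toBlocks₂₁ ⊙ B.toBlocks₂₁ := rfl
  have h₂₂ : (A ⊙ B).toBlocks₂₂ = A.toBlocks₂₂ ⊙ B.toBlocks₂₂ := rfl
  conv_lhs => rw [schurComplement₂₂, h₁₁, h₁₂, h₂₁, h₂₂, hadamard_mul_inv_mul_hadamard]
  ext i j
  simp only [schurComplement₂₂, sub_apply, add_apply, hadamard_apply]
  ring

theorem PosDef.det_mul_det_le_det_hadamard_of_sum [Fintype m] [DecidableEq m]
    [Fintype o] [DecidableEq o] [Unique o]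
    (ih : ∀ A B : Matrix m m 𝕜, A.PosSemidef → B.PosSemidef → A.det * B.det ≤ (A ⊙ B).det)
    {A B : Matrix (m ⊕ o) (m ⊕ o) 𝕜} (hA : A.PosDef) (hB : B.PosDef) :
    A.det * B.det ≤ (A ⊙ B).det := by
  have hSA := hA.posSemidef_schurComplement₂₂
  have hSB := hB.posSemidef_schurComplement₂₂
  have hEA := hA.posSemidef_toBlocks₁₂_mul_inv_mul_toBlocks₂₁
  have hEB := hB.posSemidef_toBlocks₁₂_mul_inv_mul_toBlocks₂₁
  have hα := hA.toBlocks₂₂.det_pos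
  have hβ := hB.toBlocks₂₂.det_pos
  have hαβ : (A ⊙ B).toBlocks₂₂.det = A.toBlocks₂₂.det * B.toBlocks₂₂.det := by
    rw [det_unique, det_unique, det_unique]
    rfl
  rw [det_eq_det_toBlocks₂₂_mul_det_schurComplement₂₂ A hα.ne'.isUnit,
    det_eq_det_toBlocks₂₂_mul_det_schurComplement₂₂ B hβ.ne'.isUnit,
    det_eq_det_toBlocks₂₂_mul_det_schurComplement₂₂ (A ⊙ B) (hαβ ▸ (mul_pos hα hβ).ne'.isUnit),
    hαβ, schurComplement₂₂_hadamard]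
  calc _ = A.toBlocks₂₂.det * B.toBlocks₂₂.det *
        (A.schurComplement₂₂.det * B.schurComplement₂₂.det) := by ring
    _ ≤ A.toBlocks₂₂.det * B.toBlocks₂₂.det * (A.schurComplement₂₂ ⊙ B.schurComplement₂₂).det :=
      mul_le_mul_of_nonneg_left (ih _ _ hSA hSB) (mul_pos hα hβ).le
    _ ≤ _ := mul_le_mul_of_nonneg_left ((hSA.hadamard hSB).det_le_det_add
        ((hSA.hadamard hEB).add (hEA.hadamard hSB))) (mul_pos hα hβ).le

theorem PosSemidef.det_mul_det_le_det_hadamard_fin {n : ℕ} {A B : Matrix (Fin n) (Fin n) 𝕜}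
    (hA : A.PosSemidef) (hB : B.PosSemidef) : A.det * B.det ≤ (A ⊙ B).det := by
  induction n with
  | zero => simp
  | succ n ih =>
    by_cases hAB : A.PosDef ∧ B.PosDef
    · have e : Fin n ⊕ Fin 1 ≃ Fin (n + 1) := finSumFinEquiv
      simpa [det_submatrix_equiv_self, ← submatrix_hadamard] using
        PosDef.det_mul_det_le_det_hadamard_of_sum (fun _ _ => ih) (hAB.1.submatrix e.injective)
          (hAB.2.submatrix e.injective)
    · have hdet : A.det * B.det = 0 := by
        rw [not_and_or, hA.posDef_iff_det_ne_zero, hB.posDef_iff_det_ne_zero, not_not,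
          not_not] at hAB
        rcases hAB with h | h <;> simp [h]
      exact hdet ▸ (hA.hadamard hB).det_nonneg

theorem PosSemidef.det_mul_det_le_det_hadamard {n : Type*} [Fintype n] [DecidableEq n]
    {A B : Matrix n n 𝕜} (hA : A.PosSemidef) (hB : B.PosSemidef) :
    A.det * B.det ≤ (A ⊙ B).det := by
  let e := (Fintype.equivFin n).symm
  simpa [det_submatrix_equiv_self, ← submatrix_hadamard] using
    (hA.submatrix e).det_mul_det_le_det_hadamard_fin (hB.submatrix e)

end Matrix

theorem oppenheim_det_le {N : ℕ} (A B : Matrix (Fin N) (Fin N) ℂ)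
    (hA : A.PosSemidef) (hB : B.PosSemidef) :
    A.det.re * B.det.re ≤ (Matrix.hadamard A B).det.re := by
  have hB_real : B.det.im = 0 := (Complex.nonneg_iff.mp hB.det_nonneg).2.symm
  simpa [Complex.mul_re, hB_real] using Complex.re_le_re (hA.det_mul_det_le_det_hadamard hB)
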